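/- Soundness and completeness of the rational closure algorithm: for every defeasible knowledge base K = T ∪ D and all ALC concepts C and D, K rationally deduces C ⊏∼ D (K ⊢_rat C ⊏∼ D, as computed from the output of the ranking procedure) if and only if K rationally entails C ⊏∼ D (K ⊨_rat C ⊏∼ D, i.e. the big ranked model of K satisfies C ⊏∼ D). -/
import Mathlib


namespace DefeasibleDL

/-- ALC concepts over concept names `C` and role names `R`. -/
inductive Concept (C R : Type) : Type where
  | top : Concept C R
  | bot : Concept C R
  | atom : C → Concept C R
  | neg : Concept C R → Concept C R
  | conj : Concept C R → Concept C R → Concept C R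
  | disj : Concept C R → Concept C R → Concept C R
  | ex : R → Concept C R → Concept C R
  | all : R → Concept C R → Concept C R

/-- A classical interpretation with domain `D`. -/
structure ClassInterp (C R D : Type) where
  interpC : C → Set D
  interpR : R → D → D → Prop

/-- Extension of a concept in a classical interpretation. -/
def ClassInterp.eval {C R D : Type} (I : ClassInterp C R D) : Concept C R → Set D
  | .top => Set.univ
  | .bot => ∅
  | .atom a => I.interpC a
  | .neg c => (I.eval c)ᶜ
  | .conj c d => I.eval c ∩ I.eval d
  | .disj c d => I.eval c ∪ I.eval d
  | .ex r c => {x | ∃ y, I.interpR r x y ∧ y ∈ I.eval c}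
  | .all r c => {x | ∀ y, I.interpR r x y → y ∈ I.eval c}

/-- The `pref`-minimal elements of a set `S`. -/
def minSet {D : Type} (pref : D → D → Prop) (S : Set D) : Set D :=
  {x | x ∈ S ∧ ∀ y ∈ S, ¬ pref y x}

/-- A preferential interpretation: a classical interpretation together with a smooth
strict partial order on the domain. -/
structure PrefInterp (C R D : Type) extends ClassInterp C R D where
  pref : D → D → Prop
  pref_irrefl : ∀ x, ¬ pref x x
  pref_trans : ∀ x y z, pref x y → pref y z → pref x z
  smooth : ∀ c : Concept C R, (toClassInterp.eval c).Nonempty →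
      (minSet pref (toClassInterp.eval c)).Nonempty

/-- Satisfaction of a general concept inclusion `c ⊑ d`. -/
def PrefInterp.satGCI {C R D : Type} (P : PrefInterp C R D) (c d : Concept C R) : Prop :=
  P.toClassInterp.eval c ⊆ P.toClassInterp.eval d

/-- Satisfaction of a defeasible concept inclusion `c ⊏∼ d`. -/
def PrefInterp.satDCI {C R D : Type} (P : PrefInterp C R D) (c d : Concept C R) : Prop :=
  minSet P.pref (P.toClassInterp.eval c) ⊆ P.toClassInterp.eval d

/-- A strict partial order is modular if its incomparability relation is transitive. -/
def Modular {D : Type} (pref : D → D → Prop) : Prop :=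
  ∀ x y z : D, (¬ pref x y ∧ ¬ pref y x) → (¬ pref y z ∧ ¬ pref z y) →
    (¬ pref x z ∧ ¬ pref z x)

/-- Convexity of a height function: every value below an attained value is attained. -/
def Convex {D : Type} (h : D → ℕ) : Prop :=
  ∀ (x : D) (j : ℕ), j < h x → ∃ y : D, h y = j

/-- `pref` is ranked by the convex height function `h`. -/
def RankedBy {D : Type} (pref : D → D → Prop) (h : D → ℕ) : Prop :=
  Convex h ∧ ∀ x y : D, pref x y ↔ h x < h y

/-- `pref` is a ranked order. -/
def IsRanked {D : Type} (pref : D → D → Prop) : Prop :=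
  ∃ h : D → ℕ, RankedBy pref h

/-- Statements: general or defeasible concept inclusions. -/
inductive Stmt (C R : Type) : Type where
  | gci : Concept C R → Concept C R → Stmt C R
  | dci : Concept C R → Concept C R → Stmt C R

def PrefInterp.satStmt {C R D : Type} (P : PrefInterp C R D) : Stmt C R → Prop
  | .gci c d => P.satGCI c d
  | .dci c d => P.satDCI c d

/-- A defeasible knowledge base: a finite TBox and a finite DTBox
(both represented as sets of pairs of concepts). -/
structure KB (C R : Type) where
  tbox : Set (Concept C R × Concept C R)
  dbox : Set (Concept C R × Concept C R)
  tbox_finite : tbox.Finite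
  dbox_finite : dbox.Finite

/-- The statements of a knowledge base. -/
def KB.stmts {C R : Type} (K : KB C R) : Set (Stmt C R) :=
  {s | (∃ p ∈ K.tbox, s = Stmt.gci p.1 p.2) ∨ (∃ p ∈ K.dbox, s = Stmt.dci p.1 p.2)}

/-- A preferential model of a knowledge base. -/
def PrefInterp.isModel {C R D : Type} (P : PrefInterp C R D) (K : KB C R) : Prop :=
  (∀ p ∈ K.tbox, P.satGCI p.1 p.2) ∧ (∀ p ∈ K.dbox, P.satDCI p.1 p.2)

/-- Preferential entailment. -/
def prefEntails {C R : Type} (K : KB C R) (s : Stmt C R) : Prop :=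
  ∀ (D : Type) (_ : Nonempty D) (P : PrefInterp C R D), P.isModel K → P.satStmt s

/-- Modular entailment. -/
def modEntails {C R : Type} (K : KB C R) (s : Stmt C R) : Prop :=
  ∀ (D : Type) (_ : Nonempty D) (P : PrefInterp C R D),
    Modular P.pref → P.isModel K → P.satStmt s

/-- A classical interpretation satisfies all GCIs of a TBox `T`. -/
def satisfiesTBox {C R D : Type} (I : ClassInterp C R D)
    (T : Set (Concept C R × Concept C R)) : Prop :=
  ∀ p ∈ T, I.eval p.1 ⊆ I.eval p.2

/-- The extension of the conjunction `⊓ D̄s` of the materialisation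
`D̄s = {¬c ⊔ d : c ⊏∼ d ∈ Ds}` of a set of DCIs. -/
def matSet {C R D : Type} (I : ClassInterp C R D)
    (Ds : Set (Concept C R × Concept C R)) : Set D :=
  {x | ∀ p ∈ Ds, x ∈ I.eval (Concept.disj (Concept.neg p.1) p.2)}

/-- Classical entailment `T ⊨ ⊓D̄s ⊑ ¬c`. -/
def entailsMatNeg {C R : Type} (T Ds : Set (Concept C R × Concept C R))
    (c : Concept C R) : Prop :=
  ∀ (D : Type) (_ : Nonempty D) (I : ClassInterp C R D),
    satisfiesTBox I T → matSet I Ds ⊆ (I.eval c)ᶜ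

/-- Classical entailment `T ⊨ ⊓D̄s ⊓ c ⊑ d`. -/
def entailsMatConj {C R : Type} (T Ds : Set (Concept C R × Concept C R))
    (c d : Concept C R) : Prop :=
  ∀ (D : Type) (_ : Nonempty D) (I : ClassInterp C R D),
    satisfiesTBox I T → matSet I Ds ∩ I.eval c ⊆ I.eval d

/-- Classical entailment `T ⊨ c ⊑ d`. -/
def classEntails {C R : Type} (T : Set (Concept C R × Concept C R))
    (c d : Concept C R) : Prop :=
  ∀ (D : Type) (_ : Nonempty D) (I : ClassInterp C R D),
    satisfiesTBox I T → I.eval c ⊆ I.eval d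

/-- `Exceptional(T, Ds)`: the DCIs `c ⊏∼ d` of `Ds` with `T ⊨ ⊓D̄s ⊑ ¬c`. -/
def ExcSyn {C R : Type} (T Ds : Set (Concept C R × Concept C R)) :
    Set (Concept C R × Concept C R) :=
  {p | p ∈ Ds ∧ entailsMatNeg T Ds p.1}

/-- The syntactic exceptionality sequence `E_0 = Ds`, `E_{i+1} = Exceptional(T, E_i)`. -/
def EseqSyn {C R : Type} (T Ds : Set (Concept C R × Concept C R)) :
    ℕ → Set (Concept C R × Concept C R)
  | 0 => Ds
  | n + 1 => ExcSyn T (EseqSyn T Ds n)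

/-- The fixed point `D*_∞` of the syntactic exceptionality sequence (the sequence
is decreasing and, for a finite DTBox, stabilises, so the fixed point is the
intersection of its members). -/
def EfixSyn {C R : Type} (T Ds : Set (Concept C R × Concept C R)) :
    Set (Concept C R × Concept C R) :=
  ⋂ n : ℕ, EseqSyn T Ds n

/-- One iteration of the outer loop of `ComputeRanking`: the DCIs of infinite rank
are moved, as classical inclusions, from the DTBox to the TBox. -/
def rankStep {C R : Type} :
    Set (Concept C R × Concept C R) × Set (Concept C R × Concept C R) →
      Set (Concept C R × Concept C R) × Set (Concept C R × Concept C R) :=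
  fun TD => (TD.1 ∪ EfixSyn TD.1 TD.2, TD.2 \ EfixSyn TD.1 TD.2)

/-- `ComputeRanking(K)`: iterate `rankStep` until stabilisation (this happens after
at most `|D| + 1` steps, since each productive step strictly shrinks the DTBox),
obtaining the normalised knowledge base `K* = T* ∪ D*`. -/
noncomputable def computeRanking {C R : Type} (K : KB C R) :
    Set (Concept C R × Concept C R) × Set (Concept C R × Concept C R) :=
  rankStep^[K.dbox.ncard + 1] (K.tbox, K.dbox)

/-- Rational deduction `K ⊢_rat c ⊏∼ d`: with `T*`, `D*` the output of
`ComputeRanking(K)` and `E_i = EseqSyn T* D* i` the final exceptionality sequence,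
either there is a first `i` with `T* ⊭ ⊓Ē_i ⊑ ¬c`, and then `T* ⊨ ⊓Ē_i ⊓ c ⊑ d`;
or there is no such `i`, and then `T* ⊨ c ⊑ d`. -/
def ratDeduces {C R : Type} (K : KB C R) (c d : Concept C R) : Prop :=
  (∃ i : ℕ,
    (∀ j < i, entailsMatNeg (computeRanking K).1
      (EseqSyn (computeRanking K).1 (computeRanking K).2 j) c) ∧
    ¬ entailsMatNeg (computeRanking K).1
      (EseqSyn (computeRanking K).1 (computeRanking K).2 i) c ∧
    entailsMatConj (computeRanking K).1
      (EseqSyn (computeRanking K).1 (computeRanking K).2 i) c d) ∨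
  ((∀ i : ℕ, entailsMatNeg (computeRanking K).1
      (EseqSyn (computeRanking K).1 (computeRanking K).2 i) c) ∧
    classEntails (computeRanking K).1 c d)

/-- Orders induced by a height function are smooth on every set. -/
theorem minSet_height_nonempty {D : Type} (g : D → ℕ) (S : Set D)
    (hS : S.Nonempty) : (minSet (fun x y => g x < g y) S).Nonempty := by
  obtain ⟨x, hx⟩ := hS
  have hne : (g '' S).Nonempty := ⟨g x, x, hx, rfl⟩
  obtain ⟨y, hyS, hyg⟩ := Nat.sInf_mem hne
  refine ⟨y, hyS, ?_⟩
  intro z hz hlt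
  have hle : sInf (g '' S) ≤ g z := Nat.sInf_le ⟨z, hz, rfl⟩
  omega

/-- The preferential interpretation determined by a classical interpretation and
a height function. -/
def ofHeight {C R D : Type} (I : ClassInterp C R D) (g : D → ℕ) :
    PrefInterp C R D where
  toClassInterp := I
  pref x y := g x < g y
  pref_irrefl _ := lt_irrefl _
  pref_trans _ _ _ h1 h2 := lt_trans h1 h2
  smooth _ hc := minSet_height_nonempty g _ hc

/-- `Mod_Δ(K)`: the ranked models of `K` with domain `Δ`. -/
abbrev RankedModelOn {C R : Type} (Δ : Type) (K : KB C R) : Type :=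
  {M : PrefInterp C R Δ // IsRanked M.pref ∧ M.isModel K}

/-- A height function witnessing rankedness. -/
noncomputable def heightFn {C R D : Type} (M : PrefInterp C R D)
    (h : IsRanked M.pref) : D → ℕ :=
  Classical.choose h

/-- The big ranked model of `K`: the ranked union of all ranked models of `K`
with domain `Δ`.  Its domain is the disjoint union of the domains, concept and
role names are interpreted componentwise (roles relate only elements of the same
component), and each element keeps the height it has in its component. -/
noncomputable def bigModel {C R : Type} (Δ : Type) (K : KB C R) :
    PrefInterp C R (RankedModelOn Δ K × Δ) :=
  ofHeight
    { interpC := fun a => {p | p.2 ∈ p.1.val.interpC a}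
      interpR := fun r p q => p.1 = q.1 ∧ p.1.val.interpR r p.2 q.2 }
    (fun p => heightFn p.1.val p.1.prop.1 p.2)

/-- Rational entailment: truth in the big ranked model of `K`. -/
def ratEntails {C R : Type} (Δ : Type) (K : KB C R) (s : Stmt C R) : Prop :=
  (bigModel Δ K).satStmt s


/-! ### Auxiliary development -/

section Transfer

variable {C R : Type}

/-- `f` embeds `V` as a "component" of `U`: concept memberships are preserved and
role successors of image points are exactly images of successors. -/
def IsComp {D E : Type} (f : D → E) (V : ClassInterp C R D) (U : ClassInterp C R E) : Prop :=
  (∀ n a, f a ∈ U.interpC n ↔ a ∈ V.interpC n) ∧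
  (∀ r a y, U.interpR r (f a) y ↔ ∃ b, V.interpR r a b ∧ y = f b)

theorem IsComp.eval {D E : Type} {f : D → E} {V : ClassInterp C R D}
    {U : ClassInterp C R E} (h : IsComp f V U) :
    ∀ (c : Concept C R) (a : D), f a ∈ U.eval c ↔ a ∈ V.eval c := by
  intro c
  induction c with
  | top => intro a; simp [ClassInterp.eval]
  | bot => intro a; simp [ClassInterp.eval]
  | atom n => intro a; exact h.1 n a
  | neg c ih => intro a; simp only [ClassInterp.eval, Set.mem_compl_iff]; rw [ih]
  | conj c d ihc ihd => intro a
                        simp only [ClassInterp.eval, Set.mem_inter_iff]; rw [ihc, ihd]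
  | disj c d ihc ihd => intro a
                        simp only [ClassInterp.eval, Set.mem_union]; rw [ihc, ihd]
  | ex r c ih =>
      intro a
      simp only [ClassInterp.eval, Set.mem_setOf_eq]
      constructor
      · rintro ⟨y, hy, hyc⟩
        rcases (h.2 r a y).1 hy with ⟨b, hb, rfl⟩
        exact ⟨b, hb, (ih b).1 hyc⟩
      · rintro ⟨b, hb, hbc⟩
        exact ⟨f b, (h.2 r a (f b)).2 ⟨b, hb, rfl⟩, (ih b).2 hbc⟩
  | all r c ih =>
      intro a
      simp only [ClassInterp.eval, Set.mem_setOf_eq]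
      constructor
      · intro H b hb
        exact (ih b).1 (H (f b) ((h.2 r a (f b)).2 ⟨b, hb, rfl⟩))
      · intro H y hy
        rcases (h.2 r a y).1 hy with ⟨b, hb, rfl⟩
        exact (ih b).2 (H b hb)

/-- Membership in the evaluation of a materialised DCI. -/
theorem mem_eval_material {D : Type} (I : ClassInterp C R D) (A B : Concept C R) (x : D) :
    x ∈ I.eval (Concept.disj (Concept.neg A) B) ↔ (x ∈ I.eval A → x ∈ I.eval B) := by
  simp only [ClassInterp.eval, Set.mem_union, Set.mem_compl_iff]
  tauto

theorem matSet_antitone {D : Type} (I : ClassInterp C R D)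
    {Ds Ds' : Set (Concept C R × Concept C R)} (h : Ds' ⊆ Ds) :
    matSet I Ds ⊆ matSet I Ds' :=
  fun _ hx p hp => hx p (h hp)

theorem mem_matSet_univ {D : Type} (I : ClassInterp C R D) (x : D) :
    x ∈ matSet I (∅ : Set (Concept C R × Concept C R)) := by
  intro p hp; exact absurd hp (Set.notMem_empty p)

theorem entailsMatNeg_mono {T : Set (Concept C R × Concept C R)}
    {Ds Ds' : Set (Concept C R × Concept C R)} (h : Ds' ⊆ Ds) {c : Concept C R}
    (he : entailsMatNeg T Ds' c) : entailsMatNeg T Ds c :=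
  fun D hD I hI => fun x hx => he D hD I hI (matSet_antitone I h hx)

end Transfer

section Eseq

variable {C R : Type}

theorem EseqSyn_succ_subset (T Ds : Set (Concept C R × Concept C R)) (i : ℕ) :
    EseqSyn T Ds (i + 1) ⊆ EseqSyn T Ds i :=
  fun _ hp => hp.1

theorem EseqSyn_antitone (T Ds : Set (Concept C R × Concept C R)) {i j : ℕ} (h : i ≤ j) :
    EseqSyn T Ds j ⊆ EseqSyn T Ds i := by
  induction j with
  | zero => simp_all
  | succ j ih =>
      rcases Nat.lt_or_ge i (j+1) with hlt | hge
      · exact (EseqSyn_succ_subset T Ds j).trans (ih (Nat.lt_succ_iff.mp hlt))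
      · have : i = j + 1 := le_antisymm h hge
        subst this; exact subset_rfl

theorem EseqSyn_subset (T Ds : Set (Concept C R × Concept C R)) (i : ℕ) :
    EseqSyn T Ds i ⊆ Ds := EseqSyn_antitone T Ds (Nat.zero_le i)

/-- Once two consecutive members agree, the sequence is constant. -/
theorem EseqSyn_eventually_const (T Ds : Set (Concept C R × Concept C R)) {N : ℕ}
    (h : EseqSyn T Ds (N+1) = EseqSyn T Ds N) :
    ∀ m, N ≤ m → EseqSyn T Ds m = EseqSyn T Ds N := by
  intro m hm
  induction m with
  | zero =>
      have h0 : N = 0 := Nat.le_zero.mp hm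
      subst h0; rfl
  | succ m ih =>
      rcases Nat.lt_or_ge N (m+1) with hlt | hge
      · have hNm : N ≤ m := Nat.lt_succ_iff.mp hlt
        have : EseqSyn T Ds m = EseqSyn T Ds N := ih hNm
        show ExcSyn T (EseqSyn T Ds m) = EseqSyn T Ds N
        rw [this]; exact h
      · have : N = m + 1 := le_antisymm hm hge
        simp [this]

/-- The sequence stabilises: there is an `N` from which on it is constant. -/
theorem EseqSyn_stabilises (T Ds : Set (Concept C R × Concept C R)) (hfin : Ds.Finite) :
    ∃ N, ∀ m, N ≤ m → EseqSyn T Ds m = EseqSyn T Ds N := by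
  have hne : (Set.range fun n => (EseqSyn T Ds n).ncard).Nonempty := ⟨_, ⟨0, rfl⟩⟩
  obtain ⟨N, hN⟩ := Nat.sInf_mem hne
  refine ⟨N, fun m hm => ?_⟩
  have hsub : EseqSyn T Ds m ⊆ EseqSyn T Ds N := EseqSyn_antitone T Ds hm
  have hfinN : (EseqSyn T Ds N).Finite := hfin.subset (EseqSyn_subset T Ds N)
  apply Set.eq_of_subset_of_ncard_le hsub _ hfinN
  have hN' : (EseqSyn T Ds N).ncard = sInf (Set.range fun n => (EseqSyn T Ds n).ncard) := hN
  rw [hN']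
  exact Nat.sInf_le ⟨m, rfl⟩

theorem EfixSyn_eq (T Ds : Set (Concept C R × Concept C R)) {N : ℕ}
    (h : ∀ m, N ≤ m → EseqSyn T Ds m = EseqSyn T Ds N) :
    EfixSyn T Ds = EseqSyn T Ds N := by
  apply subset_antisymm
  · exact Set.iInter_subset _ N
  · intro p hp
    apply Set.mem_iInter.mpr
    intro i
    rcases Nat.lt_or_ge i N with hlt | hge
    · exact EseqSyn_antitone T Ds (le_of_lt hlt) hp
    · rw [h i hge]; exact hp

theorem EfixSyn_subset (T Ds : Set (Concept C R × Concept C R)) :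
    EfixSyn T Ds ⊆ Ds := (Set.iInter_subset _ 0).trans subset_rfl

end Eseq

section Ranking

variable {C R : Type}

theorem rankStep_of_efix_empty {TD : Set (Concept C R × Concept C R) × Set (Concept C R × Concept C R)}
    (h : EfixSyn TD.1 TD.2 = ∅) : rankStep TD = TD := by
  unfold rankStep
  rw [h]
  simp

theorem iterate_const_of_fix {TD : Set (Concept C R × Concept C R) × Set (Concept C R × Concept C R)}
    (h : rankStep TD = TD) : ∀ m, rankStep^[m] TD = TD := by
  intro m
  induction m with
  | zero => rfl
  | succ m ih => rw [Function.iterate_succ_apply', ih, h]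

theorem rankIter_dbox_subset (K : KB C R) :
    ∀ k, (rankStep^[k] (K.tbox, K.dbox)).2 ⊆ K.dbox ∧
         (rankStep^[k] (K.tbox, K.dbox)).1 ⊆ K.tbox ∪ K.dbox := by
  intro k
  induction k with
  | zero => exact ⟨subset_rfl, Set.subset_union_left⟩
  | succ k ih =>
      rw [Function.iterate_succ_apply']
      constructor
      · exact (Set.diff_subset).trans ih.1
      · apply Set.union_subset ih.2
        exact (EfixSyn_subset _ _).trans (ih.1.trans Set.subset_union_right)

theorem rankIter_dbox_finite (K : KB C R) :
    ∀ k, (rankStep^[k] (K.tbox, K.dbox)).2.Finite :=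
  fun k => K.dbox_finite.subset (rankIter_dbox_subset K k).1

/-- The ranking procedure terminates: the output of `computeRanking` has empty
fixed-point set, i.e. no more exceptional DCIs of infinite rank. -/
theorem computeRanking_fix (K : KB C R) :
    EfixSyn (computeRanking K).1 (computeRanking K).2 = ∅ := by
  set pt : ℕ → Set (Concept C R × Concept C R) × Set (Concept C R × Concept C R) :=
    fun k => rankStep^[k] (K.tbox, K.dbox) with hpt
  have key : ∀ k, (∃ j ≤ k, EfixSyn (pt j).1 (pt j).2 = ∅) ∨
      (pt k).2.ncard + k ≤ K.dbox.ncard := by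
    intro k
    induction k with
    | zero =>
        right
        simp only [Nat.add_zero]
        exact Set.ncard_le_ncard (rankIter_dbox_subset K 0).1 K.dbox_finite
    | succ k ih =>
        rcases ih with ⟨j, hj, hfix⟩ | hcard
        · exact Or.inl ⟨j, hj.trans (Nat.le_succ k), hfix⟩
        · by_cases hE : EfixSyn (pt k).1 (pt k).2 = ∅
          · exact Or.inl ⟨k, Nat.le_succ k, hE⟩
          · right
            have hne : (EfixSyn (pt k).1 (pt k).2).Nonempty := Set.nonempty_iff_ne_empty.mpr hE
            have hsub : EfixSyn (pt k).1 (pt k).2 ⊆ (pt k).2 := EfixSyn_subset _ _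
            have hss : (pt k).2 \ EfixSyn (pt k).1 (pt k).2 ⊂ (pt k).2 := by
              constructor
              · exact Set.diff_subset
              · intro hcontra
                obtain ⟨p, hp⟩ := hne
                exact ((hcontra (hsub hp)).2 hp)
            have hlt : ((pt k).2 \ EfixSyn (pt k).1 (pt k).2).ncard < (pt k).2.ncard :=
              Set.ncard_lt_ncard hss (rankIter_dbox_finite K k)
            have hstep : (pt (k+1)).2 = (pt k).2 \ EfixSyn (pt k).1 (pt k).2 := by
              show (rankStep^[k+1] (K.tbox, K.dbox)).2 = _
              rw [Function.iterate_succ_apply']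
              rfl
            rw [hstep]
            omega
  rcases key (K.dbox.ncard + 1) with ⟨j, hj, hfix⟩ | hcard
  · have hconst : ∀ m, pt (j + m) = pt j := by
      intro m
      show rankStep^[j + m] (K.tbox, K.dbox) = rankStep^[j] (K.tbox, K.dbox)
      rw [Nat.add_comm, Function.iterate_add_apply]
      exact iterate_const_of_fix (rankStep_of_efix_empty hfix) m
    have : computeRanking K = pt j := by
      have := hconst (K.dbox.ncard + 1 - j)
      rw [Nat.add_sub_cancel' hj] at this
      exact this
    rw [this]
    exact hfix
  · omega

/-- The final exceptionality sequence reaches the empty set. -/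
theorem computeRanking_eseq_empty (K : KB C R) :
    ∃ N, EseqSyn (computeRanking K).1 (computeRanking K).2 N = ∅ := by
  have hfin : (computeRanking K).2.Finite := rankIter_dbox_finite K (K.dbox.ncard + 1)
  obtain ⟨N, hN⟩ := EseqSyn_stabilises (computeRanking K).1 (computeRanking K).2 hfin
  refine ⟨N, ?_⟩
  have := EfixSyn_eq (computeRanking K).1 (computeRanking K).2 hN
  rw [← this]
  exact computeRanking_fix K

end Ranking

section Soundness

variable {C R : Type}

/-- Lemma B'': in a model of `T ∪ Ds` ranked by a height function, every element
satisfies the materialisation of the exceptionality level given by its height. -/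
theorem mem_matSet_of_height {D : Type} (T Ds : Set (Concept C R × Concept C R))
    (P : PrefInterp C R D) (h : D → ℕ) (hr : ∀ x y, P.pref x y ↔ h x < h y)
    (hT : satisfiesTBox P.toClassInterp T)
    (hD : ∀ p ∈ Ds, P.satDCI p.1 p.2) :
    ∀ x, x ∈ matSet P.toClassInterp (EseqSyn T Ds (h x)) := by
  have main : ∀ n x, h x = n → x ∈ matSet P.toClassInterp (EseqSyn T Ds n) := by
    intro n
    induction n using Nat.strong_induction_on with
    | _ n ih =>
        intro x hx p hp
        rw [mem_eval_material]
        intro hx1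
        by_cases hex : ∃ y, y ∈ P.toClassInterp.eval p.1 ∧ h y < n
        · exfalso
          obtain ⟨y, hy1, hy2⟩ := hex
          have hyM : y ∈ matSet P.toClassInterp (EseqSyn T Ds (h y)) :=
            ih (h y) hy2 y rfl
          have hpE : p ∈ EseqSyn T Ds (h y + 1) :=
            EseqSyn_antitone T Ds (show h y + 1 ≤ n by omega) hp
          have hent : entailsMatNeg T (EseqSyn T Ds (h y)) p.1 := hpE.2
          exact hent D ⟨x⟩ P.toClassInterp hT hyM hy1
        · have hmin : x ∈ minSet P.pref (P.toClassInterp.eval p.1) := by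
            refine ⟨hx1, fun y hy hpref => ?_⟩
            exact hex ⟨y, hy, by rw [← hx]; exact (hr y x).mp hpref⟩
          exact hD p (EseqSyn_subset T Ds n hp) hmin
  exact fun x => main (h x) x rfl

/-- Lemma B2: exceptional concepts only occur above the corresponding level. -/
theorem height_gt_of_entailsMatNeg {D : Type} (T Ds : Set (Concept C R × Concept C R))
    (P : PrefInterp C R D) (h : D → ℕ) (hr : ∀ x y, P.pref x y ↔ h x < h y)
    (hT : satisfiesTBox P.toClassInterp T)
    (hD : ∀ p ∈ Ds, P.satDCI p.1 p.2) {i : ℕ} {c : Concept C R}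
    (hent : entailsMatNeg T (EseqSyn T Ds i) c) :
    ∀ x, x ∈ P.toClassInterp.eval c → i < h x := by
  intro x hx
  by_contra hcon
  have hle : h x ≤ i := Nat.le_of_not_lt hcon
  have h1 : x ∈ matSet P.toClassInterp (EseqSyn T Ds (h x)) :=
    mem_matSet_of_height T Ds P h hr hT hD x
  have h2 : x ∈ matSet P.toClassInterp (EseqSyn T Ds i) :=
    matSet_antitone _ (EseqSyn_antitone T Ds hle) h1
  exact hent D ⟨x⟩ P.toClassInterp hT h2 hx

/-- DCIs of infinite rank have empty antecedent in every ranked model. -/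
theorem eval_empty_of_mem_efix {D : Type} (T Ds : Set (Concept C R × Concept C R))
    (P : PrefInterp C R D) (h : D → ℕ) (hr : ∀ x y, P.pref x y ↔ h x < h y)
    (hT : satisfiesTBox P.toClassInterp T)
    (hD : ∀ p ∈ Ds, P.satDCI p.1 p.2) {p : Concept C R × Concept C R}
    (hp : p ∈ EfixSyn T Ds) : P.toClassInterp.eval p.1 = ∅ := by
  ext x
  simp only [Set.mem_empty_iff_false, iff_false]
  intro hx
  have hpE : p ∈ EseqSyn T Ds (h x + 1) := Set.mem_iInter.mp hp (h x + 1)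
  have hent : entailsMatNeg T (EseqSyn T Ds (h x)) p.1 := hpE.2
  exact absurd (height_gt_of_entailsMatNeg T Ds P h hr hT hD hent x hx) (lt_irrefl _)

/-- `P` is a (preferential) model of the knowledge base given by a pair of a TBox
and a DTBox. -/
def RModels {D : Type} (P : PrefInterp C R D)
    (TD : Set (Concept C R × Concept C R) × Set (Concept C R × Concept C R)) : Prop :=
  (∀ p ∈ TD.1, P.satGCI p.1 p.2) ∧ (∀ p ∈ TD.2, P.satDCI p.1 p.2)

theorem RModels_rankStep_iff {D : Type} (P : PrefInterp C R D) (hrk : IsRanked P.pref)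
    (TD : Set (Concept C R × Concept C R) × Set (Concept C R × Concept C R)) :
    RModels P TD ↔ RModels P (rankStep TD) := by
  obtain ⟨h, hconv, hr⟩ := hrk
  constructor
  · rintro ⟨hT, hD⟩
    constructor
    · intro p hp
      rcases hp with hp | hp
      · exact hT p hp
      · have : P.toClassInterp.eval p.1 = ∅ :=
          eval_empty_of_mem_efix TD.1 TD.2 P h hr hT hD hp
        intro x hx
        rw [this] at hx
        exact absurd hx (Set.notMem_empty x)
    · intro p hp
      exact hD p hp.1
  · rintro ⟨hT, hD⟩
    constructor
    · intro p hp
      exact hT p (Or.inl hp)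
    · intro p hp
      by_cases hfix : p ∈ EfixSyn TD.1 TD.2
      · have hg : P.satGCI p.1 p.2 := hT p (Or.inr hfix)
        intro x hx
        exact hg hx.1
      · exact hD p ⟨hp, hfix⟩

theorem RModels_computeRanking_iff {D : Type} (P : PrefInterp C R D) (hrk : IsRanked P.pref)
    (K : KB C R) : P.isModel K ↔ RModels P (computeRanking K) := by
  have : ∀ k, RModels P (K.tbox, K.dbox) ↔ RModels P (rankStep^[k] (K.tbox, K.dbox)) := by
    intro k
    induction k with
    | zero => rfl
    | succ k ih =>
        rw [Function.iterate_succ_apply']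
        exact ih.trans (RModels_rankStep_iff P hrk _)
  exact (Iff.rfl).trans (this (K.dbox.ncard + 1))

end Soundness

section HeightUnique

/-- Two convex height functions ranking the same order coincide. -/
theorem rankedBy_unique {D : Type} {pref : D → D → Prop} {h₁ h₂ : D → ℕ}
    (H1 : RankedBy pref h₁) (H2 : RankedBy pref h₂) : h₁ = h₂ := by
  have le_aux : ∀ (g₁ g₂ : D → ℕ), RankedBy pref g₁ → RankedBy pref g₂ →
      ∀ n x, g₂ x = n → g₁ x ≤ g₂ x := by
    intro g₁ g₂ G1 G2 n
    induction n using Nat.strong_induction_on with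
    | _ n ih =>
        intro x hx
        by_contra hcon
        have hlt : g₂ x < g₁ x := by omega
        obtain ⟨y, hy⟩ := G1.1 x (g₂ x) hlt
        have hpref : pref y x := (G1.2 y x).mpr (by omega)
        have h2lt : g₂ y < g₂ x := (G2.2 y x).mp hpref
        have := ih (g₂ y) (by omega) y rfl
        omega
  funext x
  exact le_antisymm (le_aux h₁ h₂ H1 H2 (h₂ x) x rfl) (le_aux h₂ h₁ H2 H1 (h₁ x) x rfl)

theorem heightFn_eq {C R D : Type} (M : PrefInterp C R D) (hrk : IsRanked M.pref)
    {g : D → ℕ} (hg : RankedBy M.pref g) : heightFn M hrk = g :=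
  rankedBy_unique (Classical.choose_spec hrk) hg

end HeightUnique

section BigModel

variable {C R : Type} (Δ : Type) (K : KB C R)

/-- The height function of the big ranked model. -/
noncomputable def bigH : RankedModelOn Δ K × Δ → ℕ :=
  fun p => heightFn p.1.val p.1.prop.1 p.2

theorem bigModel_pref_iff (p q : RankedModelOn Δ K × Δ) :
    (bigModel Δ K).pref p q ↔ bigH Δ K p < bigH Δ K q := Iff.rfl

theorem bigModel_isComp (M : RankedModelOn Δ K) :
    IsComp (fun a => ((M, a) : RankedModelOn Δ K × Δ)) M.val.toClassInterp
      (bigModel Δ K).toClassInterp := by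
  constructor
  · intro n a; exact Iff.rfl
  · intro r a y
    show (M = y.1 ∧ M.val.interpR r a y.2) ↔ _
    constructor
    · rintro ⟨h1, h2⟩
      exact ⟨y.2, h2, by rw [h1]⟩
    · rintro ⟨b, hb, rfl⟩
      exact ⟨rfl, hb⟩

theorem bigModel_eval (M : RankedModelOn Δ K) (a : Δ) (c : Concept C R) :
    ((M, a) : RankedModelOn Δ K × Δ) ∈ (bigModel Δ K).toClassInterp.eval c ↔
      a ∈ M.val.toClassInterp.eval c :=
  (bigModel_isComp Δ K M).eval c a

theorem heightFn_rankedBy {D : Type} (M : PrefInterp C R D) (hrk : IsRanked M.pref) :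
    RankedBy M.pref (heightFn M hrk) := Classical.choose_spec hrk

theorem bigH_rankedBy : RankedBy (bigModel Δ K).pref (bigH Δ K) := by
  constructor
  · intro p j hj
    obtain ⟨b, hb⟩ := (heightFn_rankedBy p.1.val p.1.prop.1).1 p.2 j hj
    exact ⟨(p.1, b), hb⟩
  · intro p q; exact Iff.rfl

theorem bigModel_isRanked : IsRanked (bigModel Δ K).pref :=
  ⟨bigH Δ K, bigH_rankedBy Δ K⟩

theorem bigModel_isModel : (bigModel Δ K).isModel K := by
  constructor
  · rintro p hp ⟨M, a⟩ ha
    rw [bigModel_eval] at ha ⊢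
    exact (M.prop.2.1 p hp) ha
  · rintro p hp ⟨M, a⟩ ⟨ha, hmin⟩
    rw [bigModel_eval] at ha
    rw [bigModel_eval]
    apply M.prop.2.2 p hp
    refine ⟨ha, fun y hy hpref => ?_⟩
    apply hmin (M, y) ((bigModel_eval Δ K M y p.1).mpr hy)
    rw [bigModel_pref_iff]
    show heightFn M.val M.prop.1 y < heightFn M.val M.prop.1 a
    exact ((heightFn_rankedBy M.val M.prop.1).2 y a).mp hpref

theorem bigModel_rmodels : RModels (bigModel Δ K) (computeRanking K) :=
  (RModels_computeRanking_iff (bigModel Δ K) (bigModel_isRanked Δ K) K).mp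
    (bigModel_isModel Δ K)

/-- Every element of a ranked model of `K` satisfies the materialisation at its level,
lifted to the big model. -/
theorem bigModel_mem_matSet (M : RankedModelOn Δ K) (a : Δ) :
    ((M, a) : RankedModelOn Δ K × Δ) ∈
      matSet (bigModel Δ K).toClassInterp
        (EseqSyn (computeRanking K).1 (computeRanking K).2 (bigH Δ K (M, a))) := by
  have hM : RModels M.val (computeRanking K) :=
    (RModels_computeRanking_iff M.val M.prop.1 K).mp M.prop.2
  have h1 := mem_matSet_of_height (computeRanking K).1 (computeRanking K).2 M.val
    (heightFn M.val M.prop.1) ((heightFn_rankedBy M.val M.prop.1).2) hM.1 hM.2 a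
  intro p hp
  rw [bigModel_eval]
  exact h1 p hp

/-- Global lower bound on the height of `c`-elements of the big model. -/
theorem bigModel_height_lb {c : Concept C R} {j : ℕ}
    (hent : entailsMatNeg (computeRanking K).1
      (EseqSyn (computeRanking K).1 (computeRanking K).2 j) c) :
    ∀ p : RankedModelOn Δ K × Δ, p ∈ (bigModel Δ K).toClassInterp.eval c →
      j < bigH Δ K p := by
  rintro ⟨M, a⟩ hp
  rw [bigModel_eval] at hp
  have hM : RModels M.val (computeRanking K) :=
    (RModels_computeRanking_iff M.val M.prop.1 K).mp M.prop.2
  exact height_gt_of_entailsMatNeg (computeRanking K).1 (computeRanking K).2 M.val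
    (heightFn M.val M.prop.1) ((heightFn_rankedBy M.val M.prop.1).2) hM.1 hM.2 hent a hp

end BigModel

section Subconcepts

variable {C R : Type}

/-- The set of subconcepts of a concept. -/
def sub : Concept C R → Set (Concept C R)
  | .top => {.top}
  | .bot => {.bot}
  | .atom a => {.atom a}
  | .neg c => insert (.neg c) (sub c)
  | .conj c d => insert (.conj c d) (sub c ∪ sub d)
  | .disj c d => insert (.disj c d) (sub c ∪ sub d)
  | .ex r c => insert (.ex r c) (sub c)
  | .all r c => insert (.all r c) (sub c)

theorem mem_sub_self (c : Concept C R) : c ∈ sub c := by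
  cases c <;> simp [sub]

theorem sub_finite (c : Concept C R) : (sub c).Finite := by
  induction c with
  | top => exact Set.finite_singleton _
  | bot => exact Set.finite_singleton _
  | atom a => exact Set.finite_singleton _
  | neg c ih => exact ih.insert _
  | conj c d ihc ihd => exact (ihc.union ihd).insert _
  | disj c d ihc ihd => exact (ihc.union ihd).insert _
  | ex r c ih => exact ih.insert _
  | all r c ih => exact ih.insert _

/-- Closure under immediate subconcepts. -/
def SubClosed (S : Set (Concept C R)) : Prop :=
  (∀ a, Concept.neg a ∈ S → a ∈ S) ∧
  (∀ a b, Concept.conj a b ∈ S → a ∈ S ∧ b ∈ S) ∧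
  (∀ a b, Concept.disj a b ∈ S → a ∈ S ∧ b ∈ S) ∧
  (∀ r a, Concept.ex r a ∈ S → a ∈ S) ∧
  (∀ r a, Concept.all r a ∈ S → a ∈ S)

theorem sub_trans : ∀ c d : Concept C R, d ∈ sub c → sub d ⊆ sub c := by
  intro c
  induction c with
  | top => intro d hd; simp [sub] at hd; subst hd; simp [sub]
  | bot => intro d hd; simp [sub] at hd; subst hd; simp [sub]
  | atom a => intro d hd; simp [sub] at hd; subst hd; simp [sub]
  | neg c ih =>
      intro d hd
      rcases hd with hd | hd
      · subst hd; exact subset_rfl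
      · exact (ih d hd).trans (Set.subset_insert _ _)
  | conj c c' ihc ihc' =>
      intro d hd
      rcases hd with hd | hd
      · subst hd; exact subset_rfl
      · rcases hd with hd | hd
        · exact ((ihc d hd).trans Set.subset_union_left).trans (Set.subset_insert _ _)
        · exact ((ihc' d hd).trans Set.subset_union_right).trans (Set.subset_insert _ _)
  | disj c c' ihc ihc' =>
      intro d hd
      rcases hd with hd | hd
      · subst hd; exact subset_rfl
      · rcases hd with hd | hd
        · exact ((ihc d hd).trans Set.subset_union_left).trans (Set.subset_insert _ _)
        · exact ((ihc' d hd).trans Set.subset_union_right).trans (Set.subset_insert _ _)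
  | ex r c ih =>
      intro d hd
      rcases hd with hd | hd
      · subst hd; exact subset_rfl
      · exact (ih d hd).trans (Set.subset_insert _ _)
  | all r c ih =>
      intro d hd
      rcases hd with hd | hd
      · subst hd; exact subset_rfl
      · exact (ih d hd).trans (Set.subset_insert _ _)

theorem subClosed_sub (c : Concept C R) : SubClosed (sub c) := by
  refine ⟨?_, ?_, ?_, ?_, ?_⟩
  · intro a ha
    have := sub_trans c (Concept.neg a) ha
    exact this (by simp [sub, mem_sub_self])
  · intro a b hab
    have := sub_trans c (Concept.conj a b) hab
    exact ⟨this (by simp [sub, mem_sub_self]), this (by simp [sub, mem_sub_self])⟩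
  · intro a b hab
    have := sub_trans c (Concept.disj a b) hab
    exact ⟨this (by simp [sub, mem_sub_self]), this (by simp [sub, mem_sub_self])⟩
  · intro r a ha
    have := sub_trans c (Concept.ex r a) ha
    exact this (by simp [sub, mem_sub_self])
  · intro r a ha
    have := sub_trans c (Concept.all r a) ha
    exact this (by simp [sub, mem_sub_self])

theorem subClosed_sUnion {X : Set (Set (Concept C R))} (h : ∀ S ∈ X, SubClosed S) :
    SubClosed (⋃₀ X) := by
  refine ⟨?_, ?_, ?_, ?_, ?_⟩
  · rintro a ⟨S, hS, ha⟩; exact ⟨S, hS, (h S hS).1 a ha⟩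
  · rintro a b ⟨S, hS, hab⟩
    exact ⟨⟨S, hS, ((h S hS).2.1 a b hab).1⟩, ⟨S, hS, ((h S hS).2.1 a b hab).2⟩⟩
  · rintro a b ⟨S, hS, hab⟩
    exact ⟨⟨S, hS, ((h S hS).2.2.1 a b hab).1⟩, ⟨S, hS, ((h S hS).2.2.1 a b hab).2⟩⟩
  · rintro r a ⟨S, hS, ha⟩; exact ⟨S, hS, (h S hS).2.2.2.1 r a ha⟩
  · rintro r a ⟨S, hS, ha⟩; exact ⟨S, hS, (h S hS).2.2.2.2 r a ha⟩

/-- The closure set used for filtration: all subconcepts of the knowledge base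
and of the query concepts. -/
def clSet (K : KB C R) (c d : Concept C R) : Set (Concept C R) :=
  ⋃₀ ((fun e => sub e) '' ({c, d} ∪ (fun p : Concept C R × Concept C R => p.1) '' (K.tbox ∪ K.dbox)
      ∪ (fun p : Concept C R × Concept C R => p.2) '' (K.tbox ∪ K.dbox)))

theorem clSet_subClosed (K : KB C R) (c d : Concept C R) : SubClosed (clSet K c d) := by
  apply subClosed_sUnion
  rintro S ⟨e, _, rfl⟩
  exact subClosed_sub e

theorem clSet_finite (K : KB C R) (c d : Concept C R) : (clSet K c d).Finite := by
  apply Set.Finite.sUnion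
  · apply Set.Finite.image
    apply Set.Finite.union
    · apply Set.Finite.union
      · exact (Set.finite_singleton d).insert c
      · exact ((K.tbox_finite.union K.dbox_finite).image _)
    · exact ((K.tbox_finite.union K.dbox_finite).image _)
  · rintro S ⟨e, _, rfl⟩
    exact sub_finite e

theorem mem_clSet_of_pair (K : KB C R) (c d : Concept C R) {p : Concept C R × Concept C R}
    (hp : p ∈ K.tbox ∪ K.dbox) : p.1 ∈ clSet K c d ∧ p.2 ∈ clSet K c d := by
  constructor
  · exact ⟨sub p.1, ⟨p.1, Or.inl (Or.inr ⟨p, hp, rfl⟩), rfl⟩, mem_sub_self p.1⟩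
  · exact ⟨sub p.2, ⟨p.2, Or.inr ⟨p, hp, rfl⟩, rfl⟩, mem_sub_self p.2⟩

theorem mem_clSet_c (K : KB C R) (c d : Concept C R) : c ∈ clSet K c d :=
  ⟨sub c, ⟨c, Or.inl (Or.inl (Or.inl rfl)), rfl⟩, mem_sub_self c⟩

theorem mem_clSet_d (K : KB C R) (c d : Concept C R) : d ∈ clSet K c d :=
  ⟨sub d, ⟨d, Or.inl (Or.inl (Or.inr rfl)), rfl⟩, mem_sub_self d⟩

end Subconcepts

section Filtration

variable {C R D0 : Type} (I : ClassInterp C R D0) (cl : Set (Concept C R))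

/-- The `cl`-type of an element. -/
def tau (x : D0) : Set (Concept C R) := {e | e ∈ cl ∧ x ∈ I.eval e}

/-- The domain of the filtration: the set of realised `cl`-types. -/
def Fdom : Type := Set.range (tau I cl)

/-- The filtrated interpretation (smallest filtration). -/
def Finterp : ClassInterp C R (Fdom I cl) where
  interpC n := {q | Concept.atom n ∈ q.val}
  interpR r q q' := ∃ x y, I.interpR r x y ∧ tau I cl x = q.val ∧ tau I cl y = q'.val

/-- The canonical projection onto the filtration. -/
def tauF (x : D0) : Fdom I cl := ⟨tau I cl x, ⟨x, rfl⟩⟩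

theorem tauF_surjective : Function.Surjective (tauF I cl) := by
  rintro ⟨q, x, rfl⟩
  exact ⟨x, rfl⟩

theorem Fdom_finite (hcl : cl.Finite) : Finite (Fdom I cl) := by
  have h1 : {t : Set (Concept C R) | t ⊆ cl}.Finite := Set.Finite.finite_subsets hcl
  have h2 : Set.range (tau I cl) ⊆ {t | t ⊆ cl} := by
    rintro t ⟨x, rfl⟩
    intro e he
    exact he.1
  exact (h1.subset h2).to_subtype

/-- The filtration lemma: evaluation of concepts in the closure set is preserved. -/
theorem filt_eval (hcl : SubClosed cl) :
    ∀ e ∈ cl, ∀ x : D0, (tauF I cl x ∈ (Finterp I cl).eval e ↔ x ∈ I.eval e) := by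
  intro e
  induction e with
  | top => intro _ x; simp [ClassInterp.eval]
  | bot => intro _ x; simp [ClassInterp.eval]
  | atom n =>
      intro he x
      show Concept.atom n ∈ tau I cl x ↔ _
      simp only [tau, Set.mem_setOf_eq]
      exact ⟨fun h => h.2, fun h => ⟨he, h⟩⟩
  | neg e ih =>
      intro he x
      have he' : e ∈ cl := hcl.1 e he
      show tauF I cl x ∈ ((Finterp I cl).eval e)ᶜ ↔ x ∈ (I.eval e)ᶜ
      simp only [Set.mem_compl_iff]
      rw [ih he' x]
  | conj e f ihe ihf =>
      intro he x
      have h1 := (hcl.2.1 e f he).1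
      have h2 := (hcl.2.1 e f he).2
      show _ ∈ _ ∩ _ ↔ _ ∈ _ ∩ _
      simp only [Set.mem_inter_iff]
      rw [ihe h1 x, ihf h2 x]
  | disj e f ihe ihf =>
      intro he x
      have h1 := (hcl.2.2.1 e f he).1
      have h2 := (hcl.2.2.1 e f he).2
      show _ ∈ _ ∪ _ ↔ _ ∈ _ ∪ _
      simp only [Set.mem_union]
      rw [ihe h1 x, ihf h2 x]
  | ex r e ih =>
      intro he x
      have he' : e ∈ cl := hcl.2.2.2.1 r e he
      constructor
      · rintro ⟨q', ⟨x', y, hr, hx', hy⟩, hq'⟩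
        -- x' has the same cl-type as x
        have hx'e : x' ∈ I.eval (Concept.ex r e) := by
          refine ⟨y, hr, ?_⟩
          have : tauF I cl y = q' := Subtype.ext hy
          rw [← (ih he' y), this]
          exact hq'
        have hmem : Concept.ex r e ∈ tau I cl x' := ⟨he, hx'e⟩
        rw [hx'] at hmem
        exact hmem.2
      · rintro ⟨y, hr, hy⟩
        exact ⟨tauF I cl y, ⟨x, y, hr, rfl, rfl⟩, (ih he' y).mpr hy⟩
  | all r e ih =>
      intro he x
      have he' : e ∈ cl := hcl.2.2.2.2 r e he
      constructor
      · intro H y hy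
        exact (ih he' y).mp (H (tauF I cl y) ⟨x, y, hy, rfl, rfl⟩)
      · intro H q' hq'
        obtain ⟨x', y, hr, hx', hy⟩ := hq'
        have hx'e : x' ∈ I.eval (Concept.all r e) := by
          have hmem : Concept.all r e ∈ tau I cl x := ⟨he, H⟩
          have hx2 : tau I cl x' = tau I cl x := hx'
          rw [← hx2] at hmem
          exact hmem.2
        have hye : y ∈ I.eval e := hx'e y hr
        have : tauF I cl y = q' := Subtype.ext hy
        rw [← this]
        exact (ih he' y).mpr hye

/-- The filtration preserves satisfaction of a TBox whose concepts lie in `cl`. -/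
theorem filt_tbox (hcl : SubClosed cl) (T : Set (Concept C R × Concept C R))
    (hT : ∀ p ∈ T, p.1 ∈ cl ∧ p.2 ∈ cl) (hsat : satisfiesTBox I T) :
    satisfiesTBox (Finterp I cl) T := by
  intro p hp q hq
  obtain ⟨x, rfl⟩ := tauF_surjective I cl q
  rw [filt_eval I cl hcl p.1 (hT p hp).1 x] at hq
  rw [filt_eval I cl hcl p.2 (hT p hp).2 x]
  exact hsat p hp hq

end Filtration

section SigmaUnion

variable {C R : Type} {ι : Type} {F : ι → Type}

/-- The disjoint union of a family of classical interpretations. -/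
def sigmaInterp (J : ∀ i, ClassInterp C R (F i)) : ClassInterp C R (Σ i, F i) where
  interpC n := {p | p.2 ∈ (J p.1).interpC n}
  interpR r p q := ∃ (i : ι) (a b : F i), p = ⟨i, a⟩ ∧ q = ⟨i, b⟩ ∧ (J i).interpR r a b

theorem sigmaInterp_isComp (J : ∀ i, ClassInterp C R (F i)) (i : ι) :
    IsComp (Sigma.mk i) (J i) (sigmaInterp J) := by
  constructor
  · intro n a; exact Iff.rfl
  · intro r a y
    constructor
    · rintro ⟨i', a', b, h1, rfl, h3⟩
      injection h1 with hi ha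
      subst hi
      have ha' : a = a' := eq_of_heq ha
      subst ha'
      exact ⟨b, h3, rfl⟩
    · rintro ⟨b, hb, rfl⟩
      exact ⟨i, a, b, rfl, rfl, hb⟩

theorem sigmaInterp_eval (J : ∀ i, ClassInterp C R (F i)) (i : ι) (a : F i)
    (c : Concept C R) :
    (⟨i, a⟩ : Σ i, F i) ∈ (sigmaInterp J).eval c ↔ a ∈ (J i).eval c :=
  (sigmaInterp_isComp J i).eval c a

theorem sigmaInterp_tbox (J : ∀ i, ClassInterp C R (F i))
    (T : Set (Concept C R × Concept C R)) (h : ∀ i, satisfiesTBox (J i) T) :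
    satisfiesTBox (sigmaInterp J) T := by
  rintro p hp ⟨i, a⟩ ha
  rw [sigmaInterp_eval] at ha ⊢
  exact h i p hp ha

end SigmaUnion

section Pullback

variable {C R : Type} {D E : Type}

/-- Pull back a classical interpretation along an equivalence of domains. -/
def ClassInterp.pull (e : D ≃ E) (U : ClassInterp C R E) : ClassInterp C R D where
  interpC n := {a | e a ∈ U.interpC n}
  interpR r a b := U.interpR r (e a) (e b)

theorem pull_isComp (e : D ≃ E) (U : ClassInterp C R E) :
    IsComp (⇑e) (ClassInterp.pull e U) U := by
  constructor
  · intro n a; exact Iff.rfl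
  · intro r a y
    constructor
    · intro h
      exact ⟨e.symm y, by simpa [ClassInterp.pull] using h, (e.apply_symm_apply y).symm⟩
    · rintro ⟨b, hb, rfl⟩
      exact hb

theorem pull_eval (e : D ≃ E) (U : ClassInterp C R E) (a : D) (c : Concept C R) :
    a ∈ (ClassInterp.pull e U).eval c ↔ e a ∈ U.eval c :=
  ((pull_isComp e U).eval c a).symm

theorem pull_tbox (e : D ≃ E) (U : ClassInterp C R E)
    (T : Set (Concept C R × Concept C R)) (h : satisfiesTBox U T) :
    satisfiesTBox (ClassInterp.pull e U) T := by
  intro p hp a ha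
  rw [pull_eval] at ha ⊢
  exact h p hp ha

end Pullback

section Canonical

variable {C R : Type} (T Ds : Set (Concept C R × Concept C R))
variable {W : Type} (V : ClassInterp C R W)

/-- The canonical height of an element of a classical interpretation: the first
exceptionality level whose materialisation it satisfies. -/
noncomputable def canonH (w : W) : ℕ := sInf {j | w ∈ matSet V (EseqSyn T Ds j)}

variable {N : ℕ} (hN : EseqSyn T Ds N = ∅)

include hN in
theorem canonH_setNonempty (w : W) : {j | w ∈ matSet V (EseqSyn T Ds j)}.Nonempty := by
  refine ⟨N, ?_⟩
  show w ∈ matSet V (EseqSyn T Ds N)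
  rw [hN]
  exact mem_matSet_univ V w

include hN in
theorem canonH_mem (w : W) : w ∈ matSet V (EseqSyn T Ds (canonH T Ds V w)) :=
  Nat.sInf_mem (canonH_setNonempty T Ds V hN w)

theorem canonH_le {w : W} {j : ℕ} (h : w ∈ matSet V (EseqSyn T Ds j)) :
    canonH T Ds V w ≤ j := Nat.sInf_le h

include hN in
theorem canonH_le_N (w : W) : canonH T Ds V w ≤ N := by
  apply canonH_le
  show w ∈ matSet V (EseqSyn T Ds N)
  rw [hN]
  exact mem_matSet_univ V w

include hN in
theorem canonH_ge [Nonempty W] (hT : satisfiesTBox V T) {w : W}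
    {p : Concept C R × Concept C R} {k : ℕ} (hp : p ∈ EseqSyn T Ds k)
    (hw : w ∈ V.eval p.1) : k ≤ canonH T Ds V w := by
  by_contra hcon
  have hlt : canonH T Ds V w < k := Nat.lt_of_not_le hcon
  have hp' : p ∈ EseqSyn T Ds (canonH T Ds V w + 1) :=
    EseqSyn_antitone T Ds (by omega) hp
  have hent : entailsMatNeg T (EseqSyn T Ds (canonH T Ds V w)) p.1 := hp'.2
  exact hent W inferInstance V hT (canonH_mem T Ds V hN w) hw

include hN in
/-- Every DCI in `Ds` has a finite rank, provided the sequence reaches `∅`. -/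
theorem rank_exists {p : Concept C R × Concept C R} (hp : p ∈ Ds) :
    ∃ k, p ∈ EseqSyn T Ds k ∧ p ∉ EseqSyn T Ds (k + 1) := by
  have hNmem : N ∈ {k | p ∉ EseqSyn T Ds (k + 1)} := by
    intro hmem
    have := EseqSyn_antitone T Ds (Nat.le_succ N) hmem
    rw [hN] at this
    exact this
  have hne : {k | p ∉ EseqSyn T Ds (k + 1)}.Nonempty := ⟨N, hNmem⟩
  set k₀ := sInf {k | p ∉ EseqSyn T Ds (k + 1)} with hk₀
  refine ⟨k₀, ?_, Nat.sInf_mem hne⟩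
  cases hk : k₀ with
  | zero => exact hp
  | succ m =>
      have hm : m ∉ {k | p ∉ EseqSyn T Ds (k + 1)} := by
        apply Nat.notMem_of_lt_sInf
        omega
      simpa using not_not.mp hm

end Canonical

section CanonModel

variable {C R : Type} (T Ds : Set (Concept C R × Concept C R))
variable {W : Type} [Nonempty W] (V : ClassInterp C R W)
variable {N : ℕ} (hN : EseqSyn T Ds N = ∅) (hT : satisfiesTBox V T)
variable (hrich : ∀ p ∈ Ds, ∀ k, p ∈ EseqSyn T Ds k → p ∉ EseqSyn T Ds (k + 1) →
    ∃ w : W, w ∈ matSet V (EseqSyn T Ds k) ∧ w ∈ V.eval p.1)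

include hN hT hrich in
theorem canonH_witness {p : Concept C R × Concept C R} (hp : p ∈ Ds) {k : ℕ}
    (hk : p ∈ EseqSyn T Ds k) (hk' : p ∉ EseqSyn T Ds (k + 1)) :
    ∃ w : W, canonH T Ds V w = k ∧ w ∈ V.eval p.1 := by
  obtain ⟨w, hw1, hw2⟩ := hrich p hp k hk hk'
  exact ⟨w, le_antisymm (canonH_le T Ds V hw1) (canonH_ge T Ds V hN hT hk hw2), hw2⟩

include hN hT hrich in
theorem canonH_convex : Convex (canonH T Ds V) := by
  intro x j hj
  set N₀ := sInf {n | EseqSyn T Ds n = ∅} with hN₀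
  have hN₀mem : EseqSyn T Ds N₀ = ∅ := by
    have : N ∈ {n | EseqSyn T Ds n = ∅} := hN
    exact Nat.sInf_mem ⟨N, this⟩
  have hxN₀ : canonH T Ds V x ≤ N₀ := canonH_le_N T Ds V hN₀mem x
  have hjN₀ : j < N₀ := by omega
  have hEj : EseqSyn T Ds j ≠ ∅ := by
    intro h
    have hjmem : j ∈ {n | EseqSyn T Ds n = ∅} := h
    have := Nat.sInf_le hjmem
    omega
  have hne : EseqSyn T Ds (j + 1) ≠ EseqSyn T Ds j := by
    intro h
    have := EseqSyn_eventually_const T Ds h N₀ (by omega)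
    rw [hN₀mem] at this
    exact hEj this.symm
  have hss : EseqSyn T Ds (j + 1) ⊂ EseqSyn T Ds j :=
    ⟨EseqSyn_succ_subset T Ds j, fun h => hne (subset_antisymm (EseqSyn_succ_subset T Ds j)
      h)⟩
  obtain ⟨p, hp1, hp2⟩ := Set.exists_of_ssubset hss
  obtain ⟨w, hw, _⟩ := canonH_witness T Ds V hN hT hrich
    (EseqSyn_subset T Ds j hp1) hp1 hp2
  exact ⟨w, hw⟩

include hN hT hrich in
theorem canon_rmodels : RModels (ofHeight V (canonH T Ds V)) (T, Ds) := by
  constructor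
  · intro p hp
    exact hT p hp
  · intro p hp
    obtain ⟨k₀, hk₀, hk₀'⟩ := rank_exists T Ds hN hp
    obtain ⟨w, hw, hw2⟩ := canonH_witness T Ds V hN hT hrich hp hk₀ hk₀'
    rintro y ⟨hy1, hymin⟩
    have hge : k₀ ≤ canonH T Ds V y := canonH_ge T Ds V hN hT hk₀ hy1
    have hle : ¬ canonH T Ds V w < canonH T Ds V y := hymin w hw2
    have heq : canonH T Ds V y = k₀ := by omega
    have hmat : y ∈ matSet V (EseqSyn T Ds k₀) := by
      rw [← heq]
      exact canonH_mem T Ds V hN y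
    exact (mem_eval_material V p.1 p.2 y).mp (hmat p hk₀) hy1

omit [Nonempty W] in
theorem canon_rankedBy (hc : Convex (canonH T Ds V)) :
    RankedBy (ofHeight V (canonH T Ds V)).pref (canonH T Ds V) :=
  ⟨hc, fun _ _ => Iff.rfl⟩

end CanonModel

section Construction

variable {C R : Type}

/-- The component family of the canonical model construction. -/
def Fam {D1 : Type} (I : ClassInterp C R D1) (cl : Set (Concept C R)) {S : Type}
    {Qp : S → Type} (Jp : ∀ p : S, ClassInterp C R (Qp p)) : Option S → Type
  | none => Fdom I cl
  | some p => Fdom (Jp p) cl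

/-- The interpretations of the component family. -/
def FamInterp {D1 : Type} (I : ClassInterp C R D1) (cl : Set (Concept C R)) {S : Type}
    {Qp : S → Type} (Jp : ∀ p : S, ClassInterp C R (Qp p)) :
    ∀ o : Option S, ClassInterp C R (Fam I cl Jp o)
  | none => Finterp I cl
  | some p => Finterp (Jp p) cl

/-- The key model construction: from a classical model of `T*` containing an element
satisfying `⊓Ē_{i₀} ⊓ c`, build a ranked model of `K` over `Δ` containing a
corresponding element of height at most `i₀` in the big model. -/
theorem constr_model (Δ : Type) [Countable Δ] [Infinite Δ] (K : KB C R)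
    (c d : Concept C R) {D1 : Type} [Nonempty D1] (I : ClassInterp C R D1)
    (hI : satisfiesTBox I (computeRanking K).1) {i₀ : ℕ} (x : D1)
    (hx1 : x ∈ matSet I (EseqSyn (computeRanking K).1 (computeRanking K).2 i₀))
    (hx2 : x ∈ I.eval c) :
    ∃ (M : RankedModelOn Δ K) (a : Δ),
      ((M, a) ∈ (bigModel Δ K).toClassInterp.eval c) ∧
      bigH Δ K (M, a) ≤ i₀ ∧
      (((M, a) ∈ (bigModel Δ K).toClassInterp.eval d) → x ∈ I.eval d) := by
  classical
  set T : Set (Concept C R × Concept C R) := (computeRanking K).1 with hTdef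
  set Ds : Set (Concept C R × Concept C R) := (computeRanking K).2 with hDsdef
  set cl : Set (Concept C R) := clSet K c d with hcldef
  have hclosed : SubClosed cl := clSet_subClosed K c d
  have hclfin : cl.Finite := clSet_finite K c d
  have hTsub : T ⊆ K.tbox ∪ K.dbox := (rankIter_dbox_subset K (K.dbox.ncard + 1)).2
  have hDsub : Ds ⊆ K.dbox := (rankIter_dbox_subset K (K.dbox.ncard + 1)).1
  have hTcl : ∀ p ∈ T, p.1 ∈ cl ∧ p.2 ∈ cl := fun p hp => mem_clSet_of_pair K c d (hTsub hp)
  have hDcl : ∀ p ∈ Ds, p.1 ∈ cl ∧ p.2 ∈ cl :=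
    fun p hp => mem_clSet_of_pair K c d (Or.inr (hDsub hp))
  have hccl : c ∈ cl := mem_clSet_c K c d
  have hdcl : d ∈ cl := mem_clSet_d K c d
  obtain ⟨N, hN⟩ := computeRanking_eseq_empty K
  -- ranks of the DCIs in Ds
  have hrk : ∀ p : {p // p ∈ Ds}, ∃ k, p.val ∈ EseqSyn T Ds k ∧ p.val ∉ EseqSyn T Ds (k+1) :=
    fun p => rank_exists T Ds hN p.prop
  choose kf hk1 hk2 using hrk
  have hnent : ∀ p : {p // p ∈ Ds}, ¬ entailsMatNeg T (EseqSyn T Ds (kf p)) p.val.1 :=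
    fun p h => hk2 p ⟨hk1 p, h⟩
  -- witnessing classical models for the non-exceptionality of each rank
  have hwit : ∀ p : {p // p ∈ Ds}, ∃ (Q : Type) (J : ClassInterp C R Q) (w : Q),
      satisfiesTBox J T ∧ w ∈ matSet J (EseqSyn T Ds (kf p)) ∧ w ∈ J.eval p.val.1 := by
    intro p
    have h := hnent p
    unfold entailsMatNeg at h
    push_neg at h
    obtain ⟨Q, hQ, J, hJ, hns⟩ := h
    obtain ⟨w, hw1, hw2⟩ := Set.not_subset.mp hns
    exact ⟨Q, J, w, hJ, hw1, by simpa using hw2⟩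
  choose Qp Jp wp hJp hwp1 hwp2 using hwit
  -- the disjoint union of the filtrations of all these models
  have hDsfin : Ds.Finite := rankIter_dbox_finite K (K.dbox.ncard + 1)
  haveI : Finite {p // p ∈ Ds} := hDsfin.to_subtype
  let ι : Type := ℕ × Option {p // p ∈ Ds}
  let F : ι → Type := fun q => Fam I cl Jp q.2
  let Jf : ∀ q : ι, ClassInterp C R (F q) := fun q => FamInterp I cl Jp q.2
  haveI hFfin : ∀ q : ι, Finite (F q) := by
    rintro ⟨n, (_ | p)⟩
    · exact Fdom_finite I cl hclfin
    · exact Fdom_finite (Jp p) cl hclfin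
  haveI hFcount : ∀ q : ι, Countable (F q) := fun q => @Finite.to_countable _ (hFfin q)
  haveI hιcount : Countable ι := inferInstance
  haveI hWcount : Countable (Σ q : ι, F q) := inferInstance
  haveI hWinf : Infinite (Σ q : ι, F q) := by
    apply Infinite.of_injective (fun n : ℕ => (⟨(n, none), tauF I cl x⟩ : Σ q : ι, F q))
    intro a b h
    have := congrArg (fun s : Σ q : ι, F q => s.1.1) h
    simpa using this
  have hequiv : Nonempty (Δ ≃ (Σ q : ι, F q)) := nonempty_equiv_of_countable
  obtain ⟨e⟩ := hequiv
  set V : ClassInterp C R Δ := ClassInterp.pull e (sigmaInterp Jf) with hVdef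
  -- transfer of concept evaluation
  have hcomp : ∀ (q : ι) (t : F q) (e' : Concept C R),
      (e.symm ⟨q, t⟩ ∈ V.eval e' ↔ t ∈ (Jf q).eval e') := by
    intro q t e'
    rw [hVdef, pull_eval, Equiv.apply_symm_apply]
    exact sigmaInterp_eval Jf q t e'
  have hnone : ∀ (n : ℕ) (y : D1) (e' : Concept C R), e' ∈ cl →
      (e.symm ⟨(n, none), tauF I cl y⟩ ∈ V.eval e' ↔ y ∈ I.eval e') := by
    intro n y e' he'
    rw [hcomp ((n, none) : ι) (tauF I cl y) e']
    exact filt_eval I cl hclosed e' he' y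
  have hsome : ∀ (n : ℕ) (p : {p // p ∈ Ds}) (y : Qp p) (e' : Concept C R), e' ∈ cl →
      (e.symm ⟨(n, some p), tauF (Jp p) cl y⟩ ∈ V.eval e' ↔ y ∈ (Jp p).eval e') := by
    intro n p y e' he'
    rw [hcomp ((n, some p) : ι) (tauF (Jp p) cl y) e']
    exact filt_eval (Jp p) cl hclosed e' he' y
  -- V satisfies the TBox
  have hVT : satisfiesTBox V T := by
    apply pull_tbox
    apply sigmaInterp_tbox
    rintro ⟨n, (_ | p)⟩
    · exact filt_tbox I cl hclosed T hTcl hI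
    · exact filt_tbox (Jp p) cl hclosed T hTcl (hJp p)
  -- V is rich: it realises every rank
  have hVrich : ∀ p ∈ Ds, ∀ k, p ∈ EseqSyn T Ds k → p ∉ EseqSyn T Ds (k + 1) →
      ∃ w : Δ, w ∈ matSet V (EseqSyn T Ds k) ∧ w ∈ V.eval p.1 := by
    intro p hp k hpk hpk'
    have hkeq : k = kf ⟨p, hp⟩ := by
      by_contra hne
      rcases Nat.lt_or_ge k (kf ⟨p, hp⟩) with hlt | hge
      · exact hpk' (EseqSyn_antitone T Ds (by omega) (hk1 ⟨p, hp⟩))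
      · have : kf ⟨p, hp⟩ < k := by omega
        exact hk2 ⟨p, hp⟩ (EseqSyn_antitone T Ds (by omega) hpk)
    subst hkeq
    refine ⟨e.symm ⟨(0, some ⟨p, hp⟩), tauF (Jp ⟨p, hp⟩) cl (wp ⟨p, hp⟩)⟩, ?_, ?_⟩
    · intro q hq
      rw [mem_eval_material]
      have hq1 : q.1 ∈ cl := (hDcl q (EseqSyn_subset T Ds _ hq)).1
      have hq2 : q.2 ∈ cl := (hDcl q (EseqSyn_subset T Ds _ hq)).2
      rw [hsome 0 ⟨p, hp⟩ (wp ⟨p, hp⟩) q.1 hq1, hsome 0 ⟨p, hp⟩ (wp ⟨p, hp⟩) q.2 hq2]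
      exact (mem_eval_material (Jp ⟨p, hp⟩) q.1 q.2 (wp ⟨p, hp⟩)).mp (hwp1 ⟨p, hp⟩ q hq)
    · rw [hsome 0 ⟨p, hp⟩ (wp ⟨p, hp⟩) p.1 (hDcl p hp).1]
      exact hwp2 ⟨p, hp⟩
  -- assemble the canonical ranked model over Δ
  have hNe : Nonempty Δ := inferInstance
  set g : Δ → ℕ := canonH T Ds V with hgdef
  set P : PrefInterp C R Δ := ofHeight V g with hPdef
  have hrb : RankedBy P.pref g :=
    canon_rankedBy T Ds V (canonH_convex T Ds V hN hVT hVrich)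
  have hrkP : IsRanked P.pref := ⟨g, hrb⟩
  have hRM : RModels P (T, Ds) := canon_rmodels T Ds V hN hVT hVrich
  have hRM' : RModels P (computeRanking K) := by
    have : ((computeRanking K).1, (computeRanking K).2) = computeRanking K := rfl
    rw [← this]
    exact hRM
  have hmodel : P.isModel K := (RModels_computeRanking_iff P hrkP K).mpr hRM'
  set M : RankedModelOn Δ K := ⟨P, hrkP, hmodel⟩ with hMdef
  set a : Δ := e.symm ⟨(0, none), tauF I cl x⟩ with hadef
  have heval : ∀ e' ∈ cl, ((M, a) ∈ (bigModel Δ K).toClassInterp.eval e' ↔ x ∈ I.eval e') := by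
    intro e' he'
    rw [bigModel_eval]
    exact hnone 0 x e' he'
  refine ⟨M, a, (heval c hccl).mpr hx2, ?_, fun h => (heval d hdcl).mp h⟩
  -- the height of a is at most i₀
  have hga : g a ≤ i₀ := by
    apply canonH_le
    intro q hq
    rw [mem_eval_material]
    have hq1 : q.1 ∈ cl := (hDcl q (EseqSyn_subset T Ds _ hq)).1
    have hq2 : q.2 ∈ cl := (hDcl q (EseqSyn_subset T Ds _ hq)).2
    rw [hadef, hnone 0 x q.1 hq1, hnone 0 x q.2 hq2]
    exact (mem_eval_material I q.1 q.2 x).mp (hx1 q hq)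
  have hhf : heightFn M.val M.prop.1 = g := heightFn_eq P hrkP hrb
  show heightFn M.val M.prop.1 a ≤ i₀
  rw [hhf]
  exact hga

end Construction

section MainProof

variable {C R : Type}

theorem bigModel_satisfiesTBox (Δ : Type) (K : KB C R) :
    satisfiesTBox (bigModel Δ K).toClassInterp (computeRanking K).1 :=
  fun p hp => (bigModel_rmodels Δ K).1 p hp

end MainProof

theorem ratDeduces_iff_ratEntails' {C R : Type}
    (Δ : Type) [Countable Δ] [Infinite Δ] (K : KB C R) (c d : Concept C R) :
    ratDeduces K c d ↔ ratEntails Δ K (Stmt.dci c d) := by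
  classical
  obtain ⟨N, hN⟩ := computeRanking_eseq_empty K
  show ratDeduces K c d ↔
    minSet (bigModel Δ K).pref ((bigModel Δ K).toClassInterp.eval c) ⊆
      (bigModel Δ K).toClassInterp.eval d
  by_cases hall : ∀ i, entailsMatNeg (computeRanking K).1
      (EseqSyn (computeRanking K).1 (computeRanking K).2 i) c
  · -- Case A: `c` is unsatisfiable w.r.t. `T*`; both sides hold.
    apply iff_of_true
    · refine Or.inr ⟨hall, ?_⟩
      intro D1 hD1 I hI y hy
      exfalso
      have h1 := hall N D1 hD1 I hI
      have h2 : y ∈ matSet I (EseqSyn (computeRanking K).1 (computeRanking K).2 N) := by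
        rw [hN]; exact mem_matSet_univ I y
      exact h1 h2 hy
    · rintro x ⟨hx, -⟩
      exfalso
      have h1 := hall N _ ⟨x⟩ (bigModel Δ K).toClassInterp (bigModel_satisfiesTBox Δ K)
      have h2 : x ∈ matSet (bigModel Δ K).toClassInterp
          (EseqSyn (computeRanking K).1 (computeRanking K).2 N) := by
        rw [hN]; exact mem_matSet_univ _ x
      exact h1 h2 hx
  · -- Case B: `c` has a finite rank `i₀`.
    push_neg at hall
    have hex : ∃ i, ¬ entailsMatNeg (computeRanking K).1
        (EseqSyn (computeRanking K).1 (computeRanking K).2 i) c := hall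
    set i₀ := Nat.find hex with hi₀def
    have hni₀ : ¬ entailsMatNeg (computeRanking K).1
        (EseqSyn (computeRanking K).1 (computeRanking K).2 i₀) c := Nat.find_spec hex
    have hmin : ∀ j < i₀, entailsMatNeg (computeRanking K).1
        (EseqSyn (computeRanking K).1 (computeRanking K).2 j) c :=
      fun j hj => not_not.mp (Nat.find_min hex hj)
    -- a witness classical model for the non-exceptionality of `c` at level `i₀`
    have hwit : ∃ (D1 : Type) (_ : Nonempty D1) (I : ClassInterp C R D1),
        satisfiesTBox I (computeRanking K).1 ∧
        ∃ w, w ∈ matSet I (EseqSyn (computeRanking K).1 (computeRanking K).2 i₀) ∧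
          w ∈ I.eval c := by
      have h := hni₀
      unfold entailsMatNeg at h
      push_neg at h
      obtain ⟨D1, hD1, I, hI, hns⟩ := h
      obtain ⟨w, hw1, hw2⟩ := Set.not_subset.mp hns
      exact ⟨D1, hD1, I, hI, w, hw1, by simpa using hw2⟩
    obtain ⟨D1, hD1, Iw, hIw, w, hw1, hw2⟩ := hwit
    haveI : Nonempty D1 := hD1
    obtain ⟨M', a', hc', hh', -⟩ := constr_model Δ K c d Iw hIw w hw1 hw2
    -- all `c`-elements of the big model have height at least `i₀`
    have hgeq : ∀ z : RankedModelOn Δ K × Δ, z ∈ (bigModel Δ K).toClassInterp.eval c →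
        i₀ ≤ bigH Δ K z := by
      intro z hz
      rcases Nat.eq_zero_or_pos i₀ with h0 | hpos
      · omega
      · have := bigModel_height_lb Δ K (hmin (i₀ - 1) (by omega)) z hz
        omega
    constructor
    · -- soundness
      intro hded
      rcases hded with ⟨i, hlt, hni, hconj⟩ | ⟨hall', -⟩
      · have hieq : i = i₀ := by
          by_contra hne
          rcases Nat.lt_or_ge i₀ i with h1 | h2
          · exact hni₀ (hlt i₀ h1)
          · have : i < i₀ := by omega
            exact hni (hmin i this)
        subst hieq
        rintro x ⟨hx, hxmin⟩
        have hxh : bigH Δ K x ≤ i₀ := by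
          have h1 : ¬ (bigModel Δ K).pref (M', a') x := hxmin (M', a') hc'
          rw [bigModel_pref_iff] at h1
          omega
        have hxmat : x ∈ matSet (bigModel Δ K).toClassInterp
            (EseqSyn (computeRanking K).1 (computeRanking K).2 i₀) := by
          apply matSet_antitone _ (EseqSyn_antitone _ _ hxh)
          obtain ⟨Mx, ax⟩ := x
          exact bigModel_mem_matSet Δ K Mx ax
        exact hconj _ ⟨x⟩ (bigModel Δ K).toClassInterp (bigModel_satisfiesTBox Δ K)
          ⟨hxmat, hx⟩
      · exact absurd (hall' i₀) hni₀
    · -- completeness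
      intro hent
      refine Or.inl ⟨i₀, hmin, hni₀, ?_⟩
      intro D2 hD2 I hI y hy
      haveI : Nonempty D2 := hD2
      obtain ⟨M, a, hc, hh, hd⟩ := constr_model Δ K c d I hI y hy.1 hy.2
      apply hd
      apply hent
      refine ⟨hc, fun z hz hpref => ?_⟩
      rw [bigModel_pref_iff] at hpref
      have := hgeq z hz
      omega

/-- soundness and completeness of the rational closure algorithm:
`K ⊢_rat c ⊏∼ d` iff `K ⊨_rat c ⊏∼ d`, i.e. iff the big ranked model of `K`
satisfies `c ⊏∼ d`. -/
theorem ratDeduces_iff_ratEntails {C R : Type} [Finite C] [Finite R]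
    (Δ : Type) [Countable Δ] [Infinite Δ] (K : KB C R) (c d : Concept C R) :
    ratDeduces K c d ↔ ratEntails Δ K (Stmt.dci c d) :=
  ratDeduces_iff_ratEntails' Δ K c d

end DefeasibleDL
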